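/- MCE-IRL gradient (Proposition 1): the discounted negative log-likelihood c(λ) = E_{(s_τ,a_τ) ∼ (π^E, M)} [ −Σ_τ γ^τ log π_λ(a_τ|s_τ) ] of the expert's trajectories under the learner's softmax policy π_λ has gradient ∇_λ c(λ) = Σ_{s,a} [ ρ^{π_λ}(s,a) − ρ^{π^E}(s,a) ] ∇_λ R_λ(s,a), where ρ^{π_λ} and ρ^{π^E} are the discounted state-action occupancy measures of learner and expert, respectively. -/

import Mathlib

/-!
Substituting `Q = R + γ T V`, the expert's soft advantage `Q - V` telescopes along the expert's
visitation flow, so `c(λ) = ∑ₛ P₀(s) V_λ(s) - ∑ₛₐ ρ^{π^E}(s,a) R_λ(s,a)`. Differentiating the soft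
Bellman equation shows that, in every direction, `∇V_λ` is the value function of the softmax
policy `π_λ` for the reward `∇R_λ`; by the same telescoping, `∑ₛ P₀(s) ∇V_λ(s)` is then
`∑ₛₐ ρ^{π_λ}(s,a) ∇R_λ(s,a)`.
-/

open Finset

section MarkovChain

variable {S A : Type*} [Fintype S] [Fintype A] {T : S → A → S → ℝ} {π : S → A → ℝ}
  {P : ℕ → S → ℝ}

lemma visitation_mem_stdSimplex (hT : ∀ s a, T s a ∈ stdSimplex ℝ S)
    (hπ : ∀ s, π s ∈ stdSimplex ℝ A) (hP0 : P 0 ∈ stdSimplex ℝ S)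
    (hP : ∀ τ s', P (τ + 1) s' = ∑ s, ∑ a, P τ s * π s a * T s a s') (τ : ℕ) :
    P τ ∈ stdSimplex ℝ S := by
  induction τ with
  | zero => exact hP0
  | succ τ ih =>
    refine ⟨fun s' => ?_, ?_⟩
    · rw [hP]
      exact sum_nonneg fun s _ => sum_nonneg fun a _ =>
        mul_nonneg (mul_nonneg (ih.1 s) ((hπ s).1 a)) ((hT s a).1 s')
    · calc ∑ s', P (τ + 1) s' = ∑ s, ∑ a, P τ s * π s a * ∑ s', T s a s' := by
            simp only [hP, mul_sum]
            rw [sum_comm]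
            exact sum_congr rfl fun s _ => sum_comm
        _ = ∑ s, P τ s := by simp only [(hT _ _).2, mul_one, ← mul_sum, (hπ _).2]
        _ = 1 := ih.2

variable {γ : ℝ}

lemma summable_geometric_mul_of_mem_stdSimplex (hγ0 : 0 ≤ γ) (hγ1 : γ < 1)
    (hPmem : ∀ τ, P τ ∈ stdSimplex ℝ S) (s : S) : Summable fun τ => γ ^ τ * P τ s :=
  (summable_geometric_of_lt_one hγ0 hγ1).of_nonneg_of_le
    (fun τ => mul_nonneg (pow_nonneg hγ0 τ) ((hPmem τ).1 s))
    (fun τ => mul_le_of_le_one_right (pow_nonneg hγ0 τ) (mem_Icc_of_mem_stdSimplex (hPmem τ) s).2)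

noncomputable def discountedOccupancy (γ : ℝ) (P : ℕ → S → ℝ) (π : S → A → ℝ) (s : S) (a : A) :
    ℝ :=
  ∑' τ, γ ^ τ * (P τ s * π s a)

lemma hasSum_discountedOccupancy_mul (hγ0 : 0 ≤ γ) (hγ1 : γ < 1)
    (hPmem : ∀ τ, P τ ∈ stdSimplex ℝ S) (x : S → A → ℝ) :
    HasSum (fun τ => γ ^ τ * ∑ s, ∑ a, P τ s * π s a * x s a)
      (∑ s, ∑ a, discountedOccupancy γ P π s a * x s a) := by
  have hterm (s : S) (a : A) : HasSum (fun τ => γ ^ τ * (P τ s * π s a) * x s a)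
      (discountedOccupancy γ P π s a * x s a) := by
    refine HasSum.mul_right _ (Summable.hasSum ?_)
    simpa only [mul_assoc] using
      (summable_geometric_mul_of_mem_stdSimplex hγ0 hγ1 hPmem s).mul_right (π s a)
  convert hasSum_sum fun s _ => hasSum_sum fun a _ => hterm s a using 2 with τ
  simp only [mul_sum, mul_assoc]

lemma sum_visitation_mul_bellman_residual (hπ : ∀ s, π s ∈ stdSimplex ℝ A)
    (hP : ∀ τ s', P (τ + 1) s' = ∑ s, ∑ a, P τ s * π s a * T s a s') (v : S → ℝ) (τ : ℕ) :
    ∑ s, ∑ a, P τ s * π s a * (v s - γ * ∑ s', T s a s' * v s')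
      = ∑ s, P τ s * v s - γ * ∑ s', P (τ + 1) s' * v s' := by
  simp only [mul_sub, sum_sub_distrib]
  congr 1
  · refine sum_congr rfl fun s _ => ?_
    rw [← sum_mul, ← mul_sum, (hπ s).2, mul_one]
  · simp only [hP, mul_sum, sum_mul]
    symm
    rw [sum_comm]
    refine sum_congr rfl fun s _ => ?_
    rw [sum_comm]
    exact sum_congr rfl fun a _ => sum_congr rfl fun s' _ => by ring

lemma hasSum_discounted_bellman_residual (hγ0 : 0 ≤ γ) (hγ1 : γ < 1)
    (hπ : ∀ s, π s ∈ stdSimplex ℝ A) (hPmem : ∀ τ, P τ ∈ stdSimplex ℝ S)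
    (hP : ∀ τ s', P (τ + 1) s' = ∑ s, ∑ a, P τ s * π s a * T s a s') (v : S → ℝ) :
    HasSum (fun τ => γ ^ τ * ∑ s, ∑ a, P τ s * π s a * (v s - γ * ∑ s', T s a s' * v s'))
      (∑ s, P 0 s * v s) := by
  set g : ℕ → ℝ := fun τ => γ ^ τ * ∑ s, P τ s * v s
  have hg : HasSum g (∑' τ, g τ) := by
    refine Summable.hasSum ?_
    simpa only [g, mul_sum, mul_assoc] using
      summable_sum fun s _ =>
        (summable_geometric_mul_of_mem_stdSimplex hγ0 hγ1 hPmem s).mul_right (v s)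
  have hg1 : HasSum (fun τ => g (τ + 1)) (∑' τ, g τ - g 0) := by
    simpa using (hasSum_nat_add_iff' 1).2 hg
  have hterm : (fun τ => γ ^ τ * ∑ s, ∑ a, P τ s * π s a * (v s - γ * ∑ s', T s a s' * v s'))
      = fun τ => g τ - g (τ + 1) := by
    funext τ
    rw [sum_visitation_mul_bellman_residual hπ hP]
    simp only [g, pow_succ]
    ring
  rw [hterm]
  simpa [g] using hg.sub hg1

lemma hasSum_discounted_soft_advantage (hγ0 : 0 ≤ γ) (hγ1 : γ < 1)
    (hπ : ∀ s, π s ∈ stdSimplex ℝ A) (hPmem : ∀ τ, P τ ∈ stdSimplex ℝ S)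
    (hP : ∀ τ s', P (τ + 1) s' = ∑ s, ∑ a, P τ s * π s a * T s a s')
    (r : S → A → ℝ) (v : S → ℝ) :
    HasSum (fun τ => γ ^ τ * ∑ s, ∑ a, P τ s * π s a * (r s a + γ * ∑ s', T s a s' * v s' - v s))
      (∑ s, ∑ a, discountedOccupancy γ P π s a * r s a - ∑ s, P 0 s * v s) := by
  refine ((hasSum_discountedOccupancy_mul (π := π) hγ0 hγ1 hPmem r).sub
    (hasSum_discounted_bellman_residual hγ0 hγ1 hπ hPmem hP v)).congr_fun fun τ => ?_
  simp only [← mul_sub, ← sum_sub_distrib]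
  congr! 3 with s _ a _
  ring

lemma sum_initial_mul_eq_sum_discountedOccupancy_mul (hγ0 : 0 ≤ γ) (hγ1 : γ < 1)
    (hπ : ∀ s, π s ∈ stdSimplex ℝ A) (hPmem : ∀ τ, P τ ∈ stdSimplex ℝ S)
    (hP : ∀ τ s', P (τ + 1) s' = ∑ s, ∑ a, P τ s * π s a * T s a s')
    {w : S → ℝ} {e : S → A → ℝ}
    (hw : ∀ s, w s = ∑ a, π s a * (e s a + γ * ∑ s', T s a s' * w s')) :
    ∑ s, P 0 s * w s = ∑ s, ∑ a, discountedOccupancy γ P π s a * e s a := by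
  have hres (s : S) :
      ∑ a, π s a * (w s - γ * ∑ s', T s a s' * w s') = ∑ a, π s a * e s a := by
    have h := hw s
    simp only [mul_sub, mul_add, sum_sub_distrib, sum_add_distrib, ← sum_mul, (hπ s).2,
      one_mul] at h ⊢
    linarith
  have hstep (τ : ℕ) : ∑ s, ∑ a, P τ s * π s a * (w s - γ * ∑ s', T s a s' * w s')
      = ∑ s, ∑ a, P τ s * π s a * e s a :=
    sum_congr rfl fun s _ => by simp only [mul_assoc, ← mul_sum, hres s]
  refine (hasSum_discounted_bellman_residual hγ0 hγ1 hπ hPmem hP w).unique ?_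
  simpa only [hstep] using hasSum_discountedOccupancy_mul (π := π) hγ0 hγ1 hPmem e

end MarkovChain

section SoftBellman

lemma exp_sub_log_sum_exp {ι : Type*} [Fintype ι] [Nonempty ι] (f : ι → ℝ) (i : ι) :
    Real.exp (f i - Real.log (∑ j, Real.exp (f j))) = Real.exp (f i) / ∑ j, Real.exp (f j) := by
  rw [Real.exp_sub, Real.exp_log (sum_pos (fun j _ => Real.exp_pos _) univ_nonempty)]

lemma softmax_mem_stdSimplex {ι : Type*} [Fintype ι] [Nonempty ι] (f : ι → ℝ) :
    (fun i => Real.exp (f i - Real.log (∑ j, Real.exp (f j)))) ∈ stdSimplex ℝ ι := by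
  refine ⟨fun i => (Real.exp_pos _).le, ?_⟩
  simp only [exp_sub_log_sum_exp, ← sum_div]
  exact div_self (sum_pos (fun j _ => Real.exp_pos _) univ_nonempty).ne'

variable {E : Type*} [NormedAddCommGroup E] [NormedSpace ℝ E]

theorem HasFDerivAt.log_sum_exp {ι : Type*} [Fintype ι] [Nonempty ι] {f : E → ι → ℝ}
    {f' : ι → E →L[ℝ] ℝ} {x : E} (hf : ∀ i, HasFDerivAt (fun y => f y i) (f' i) x) :
    HasFDerivAt (fun y => Real.log (∑ i, Real.exp (f y i)))
      (∑ i, Real.exp (f x i - Real.log (∑ j, Real.exp (f x j))) • f' i) x := by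
  convert (HasFDerivAt.fun_sum fun i _ => (hf i).exp).log
    (sum_pos (fun i _ => Real.exp_pos (f x i)) univ_nonempty).ne' using 1
  simp only [exp_sub_log_sum_exp, smul_sum, smul_smul, div_eq_inv_mul]

variable {S A : Type*} [Fintype S] [Fintype A] [Nonempty A] {γ : ℝ} {T : S → A → S → ℝ}
  {R Q : E → S → A → ℝ} {V : E → S → ℝ} {l : E}

lemma fderiv_soft_value (hR : ∀ s a, DifferentiableAt ℝ (fun l => R l s a) l)
    (hV : ∀ s, DifferentiableAt ℝ (fun l => V l s) l)
    (hQ : ∀ l s a, Q l s a = R l s a + γ * ∑ s', T s a s' * V l s')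
    (hVdef : ∀ l s, V l s = Real.log (∑ a, Real.exp (Q l s a))) (s : S) :
    fderiv ℝ (fun l' => V l' s) l = ∑ a, Real.exp (Q l s a - V l s) •
      (fderiv ℝ (fun l' => R l' s a) l + γ • ∑ s', T s a s' • fderiv ℝ (fun l' => V l' s') l) := by
  have hQ' (a : A) : HasFDerivAt (fun l' => Q l' s a) (fderiv ℝ (fun l' => R l' s a) l
      + γ • ∑ s', T s a s' • fderiv ℝ (fun l' => V l' s') l) l := by
    rw [show (fun l' => Q l' s a) = _ from funext fun l' => hQ l' s a]
    exact (hR s a).hasFDerivAt.add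
      ((HasFDerivAt.fun_sum fun s' _ => (hV s').hasFDerivAt.const_mul (T s a s')).const_mul γ)
  rw [hVdef l s, show (fun l' => V l' s) = _ from funext fun l' => hVdef l' s]
  exact (HasFDerivAt.log_sum_exp hQ').fderiv

lemma sum_smul_fderiv_soft_value (hγ0 : 0 ≤ γ) (hγ1 : γ < 1)
    (hR : ∀ s a, DifferentiableAt ℝ (fun l => R l s a) l)
    (hV : ∀ s, DifferentiableAt ℝ (fun l => V l s) l)
    (hQ : ∀ l s a, Q l s a = R l s a + γ * ∑ s', T s a s' * V l s')
    (hVdef : ∀ l s, V l s = Real.log (∑ a, Real.exp (Q l s a)))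
    {P : ℕ → S → ℝ} (hPmem : ∀ τ, P τ ∈ stdSimplex ℝ S)
    (hP : ∀ τ s', P (τ + 1) s' = ∑ s, ∑ a, P τ s * Real.exp (Q l s a - V l s) * T s a s') :
    ∑ s, P 0 s • fderiv ℝ (fun l' => V l' s) l
      = ∑ s, ∑ a, discountedOccupancy γ P (fun s a => Real.exp (Q l s a - V l s)) s a •
          fderiv ℝ (fun l' => R l' s a) l := by
  ext y
  simp only [_root_.sum_apply, smul_apply, smul_eq_mul]
  refine sum_initial_mul_eq_sum_discountedOccupancy_mul hγ0 hγ1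
    (fun s => hVdef l s ▸ softmax_mem_stdSimplex (Q l s)) hPmem hP fun s => ?_
  simpa only [_root_.sum_apply, smul_apply, add_apply, smul_eq_mul] using
    congrArg (· y) (fderiv_soft_value hR hV hQ hVdef s)

end SoftBellman

theorem mce_irl_gradient_general {d : ℕ} {S A : Type} [Fintype S] [Fintype A]
    [Nonempty A]
    (γ : ℝ) (hγ0 : 0 ≤ γ) (hγ1 : γ < 1)
    (P0 : S → ℝ) (hP0 : ∀ s, 0 ≤ P0 s) (hP0sum : ∑ s, P0 s = 1)
    (T : S → A → S → ℝ) (hT : ∀ s a s', 0 ≤ T s a s')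
    (hTsum : ∀ s a, ∑ s', T s a s' = 1)
    -- expert policy and visitation probabilities
    (polE : S → A → ℝ) (hpolE : ∀ s a, 0 ≤ polE s a) (hpolEsum : ∀ s, ∑ a, polE s a = 1)
    (PEs : ℕ → S → ℝ) (hPEs0 : ∀ s, PEs 0 s = P0 s)
    (hPEsrec : ∀ τ s', PEs (τ + 1) s' = ∑ s, ∑ a, PEs τ s * polE s a * T s a s')
    (PE : ℕ → S → A → ℝ) (hPE : ∀ τ s a, PE τ s a = PEs τ s * polE s a)
    -- learner: soft Bellman quantities
    (R Q : (Fin d → ℝ) → S → A → ℝ) (V : (Fin d → ℝ) → S → ℝ)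
    (hR : ∀ s a, Differentiable ℝ (fun l => R l s a))
    (hV : ∀ s, Differentiable ℝ (fun l => V l s))
    (l : Fin d → ℝ)
    (hQ : ∀ l' s a, Q l' s a = R l' s a + γ * ∑ s', T s a s' * V l' s')
    (hVdef : ∀ l' s, V l' s = Real.log (∑ a, Real.exp (Q l' s a)))
    (pol : S → A → ℝ)
    (hpol : ∀ s a, pol s a = Real.exp (Q l s a - V l s))
    (PL : ℕ → S → ℝ) (hPL0 : ∀ s, PL 0 s = P0 s)
    (hPLrec : ∀ τ s', PL (τ + 1) s' = ∑ s, ∑ a, PL τ s * pol s a * T s a s')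
    -- the discounted negative log-likelihood
    (c : (Fin d → ℝ) → ℝ)
    (hc : ∀ l', c l' = -∑' τ : ℕ, γ ^ τ * ∑ s, ∑ a, PE τ s a * (Q l' s a - V l' s)) :
    fderiv ℝ c l
      = ∑ s, ∑ a,
          ((∑' τ : ℕ, γ ^ τ * (PL τ s * pol s a)) - ∑' τ : ℕ, γ ^ τ * PE τ s a) •
            fderiv ℝ (fun l' => R l' s a) l := by
  obtain rfl : PE = fun τ s a => PEs τ s * polE s a :=
    funext fun τ => funext fun s => funext (hPE τ s)
  obtain rfl : pol = fun s a => Real.exp (Q l s a - V l s) := funext fun s => funext (hpol s)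
  have hTmem (s : S) (a : A) : T s a ∈ stdSimplex ℝ S := ⟨hT s a, hTsum s a⟩
  have hpolEmem (s : S) : polE s ∈ stdSimplex ℝ A := ⟨hpolE s, hpolEsum s⟩
  have hpolmem (s : S) : (fun a => Real.exp (Q l s a - V l s)) ∈ stdSimplex ℝ A :=
    hVdef l s ▸ softmax_mem_stdSimplex (Q l s)
  have hP0mem : P0 ∈ stdSimplex ℝ S := ⟨hP0, hP0sum⟩
  have hPEsmem := visitation_mem_stdSimplex hTmem hpolEmem (funext hPEs0 ▸ hP0mem) hPEsrec
  have hPLmem := visitation_mem_stdSimplex hTmem hpolmem (funext hPL0 ▸ hP0mem) hPLrec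
  have hc' : c = fun l' => ∑ s, P0 s * V l' s
      - ∑ s, ∑ a, discountedOccupancy γ PEs polE s a * R l' s a := by
    funext l'
    simp only [hc, hQ, (hasSum_discounted_soft_advantage hγ0 hγ1 hpolEmem hPEsmem hPEsrec
      (R l') (V l')).tsum_eq, hPEs0, neg_sub]
  have hderiv : HasFDerivAt c (∑ s, P0 s • fderiv ℝ (fun l' => V l' s) l
      - ∑ s, ∑ a, discountedOccupancy γ PEs polE s a • fderiv ℝ (fun l' => R l' s a) l) l := by
    rw [hc']
    exact (HasFDerivAt.fun_sum fun s _ => (hV s l).hasFDerivAt.const_mul (P0 s)).sub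
      (HasFDerivAt.fun_sum fun s _ => HasFDerivAt.fun_sum fun a _ =>
        (hR s a l).hasFDerivAt.const_mul _)
  rw [hderiv.fderiv, show P0 = PL 0 from funext fun s => (hPL0 s).symm,
    sum_smul_fderiv_soft_value hγ0 hγ1 (fun s a => hR s a l) (fun s => hV s l) hQ hVdef hPLmem
      hPLrec, ← sum_sub_distrib]
  refine sum_congr rfl fun s _ => ?_
  rw [← sum_sub_distrib]
  exact sum_congr rfl fun a _ => (sub_smul _ _ _).symm

/-- MCE-IRL gradient (Proposition 1): the gradient of the discounted negative
log-likelihood of the expert's trajectories under the learner's softmax policy is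
`∇c(λ) = Σ_{s,a} [ρ^{π_λ}(s,a) − ρ^{π^E}(s,a)] ∇R_λ(s,a)`. -/
theorem mce_irl_gradient {d : ℕ} {S A : Type} [Fintype S] [Fintype A]
    [Nonempty S] [Nonempty A]
    (γ : ℝ) (hγ0 : 0 ≤ γ) (hγ1 : γ < 1)
    (P0 : S → ℝ) (hP0 : ∀ s, 0 ≤ P0 s) (hP0sum : ∑ s, P0 s = 1)
    (T : S → A → S → ℝ) (hT : ∀ s a s', 0 ≤ T s a s')
    (hTsum : ∀ s a, ∑ s', T s a s' = 1)
    -- expert policy and visitation probabilities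
    (polE : S → A → ℝ) (hpolE : ∀ s a, 0 ≤ polE s a) (hpolEsum : ∀ s, ∑ a, polE s a = 1)
    (PEs : ℕ → S → ℝ) (hPEs0 : ∀ s, PEs 0 s = P0 s)
    (hPEsrec : ∀ τ s', PEs (τ + 1) s' = ∑ s, ∑ a, PEs τ s * polE s a * T s a s')
    (PE : ℕ → S → A → ℝ) (hPE : ∀ τ s a, PE τ s a = PEs τ s * polE s a)
    -- learner: soft Bellman quantities
    (R Q : (Fin d → ℝ) → S → A → ℝ) (V : (Fin d → ℝ) → S → ℝ)
    (hR : ∀ s a, Differentiable ℝ (fun l => R l s a))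
    (hV : ∀ s, Differentiable ℝ (fun l => V l s))
    (l : Fin d → ℝ)
    (hbound : ∃ C, ∀ s, ‖fderiv ℝ (fun l' => V l' s) l‖ ≤ C)
    (hQ : ∀ l' s a, Q l' s a = R l' s a + γ * ∑ s', T s a s' * V l' s')
    (hVdef : ∀ l' s, V l' s = Real.log (∑ a, Real.exp (Q l' s a)))
    (pol : S → A → ℝ)
    (hpol : ∀ s a, pol s a = Real.exp (Q l s a - V l s))
    (PL : ℕ → S → ℝ) (hPL0 : ∀ s, PL 0 s = P0 s)
    (hPLrec : ∀ τ s', PL (τ + 1) s' = ∑ s, ∑ a, PL τ s * pol s a * T s a s')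
    -- the discounted negative log-likelihood
    (c : (Fin d → ℝ) → ℝ)
    (hc : ∀ l', c l' = -∑' τ : ℕ, γ ^ τ * ∑ s, ∑ a, PE τ s a * (Q l' s a - V l' s)) :
    fderiv ℝ c l
      = ∑ s, ∑ a,
          ((∑' τ : ℕ, γ ^ τ * (PL τ s * pol s a)) - ∑' τ : ℕ, γ ^ τ * PE τ s a) •
            fderiv ℝ (fun l' => R l' s a) l :=
  mce_irl_gradient_general γ hγ0 hγ1 P0 hP0 hP0sum T hT hTsum polE hpolE hpolEsum PEs hPEs0 hPEsrec
    PE hPE R Q V hR hV l hQ hVdef pol hpol PL hPL0 hPLrec c hc
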